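/- Let H be a connected linear k-uniform hypergraph on n vertices (n, k ≥ 3) with no Berge-B_s and no Berge-K_{2,t}, where s ≥ 2 and t ≥ 1. Then for any vertex u, Σ_{v ∈ N_u} d_v ≤ (t-1)(n-1)/(k-1) + [ (6k² - 15k + 10)(s-1)/2 - (t-1) ]·d_u. -/

import Mathlib

attribute [local instance] Classical.propDecidable

/-- The degree of a vertex. -/
def hDeg {V : Type*} [DecidableEq V] (E : Finset (Finset V)) (v : V) : ℕ :=
  (E.filter (fun e => v ∈ e)).card

/-- The neighbourhood of `v`. -/
def hNbhd {V : Type*} [Fintype V] [DecidableEq V] (E : Finset (Finset V)) (v : V) :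
    Finset V :=
  Finset.univ.filter (fun w => w ≠ v ∧ ∃ e ∈ E, v ∈ e ∧ w ∈ e)

/-- `H` contains no Berge-`B_s`, where `B_s` is the book of `s` triangles sharing a
common edge `{a,b}`: there do not exist distinct vertices `a, b, c_1, …, c_s` and
`2s+1` distinct hyperedges `e₀ ⊇ {a,b}`, `f i ⊇ {a, c i}`, `g i ⊇ {b, c i}`. -/
def BergeBookFree {V : Type*} (E : Finset (Finset V)) (s : ℕ) : Prop :=
  ¬ ∃ (a b : V) (c : Fin s → V) (e₀ : Finset V) (f g : Fin s → Finset V),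
      a ≠ b ∧ Function.Injective c ∧ (∀ i, c i ≠ a ∧ c i ≠ b) ∧
      e₀ ∈ E ∧ a ∈ e₀ ∧ b ∈ e₀ ∧
      (∀ i, f i ∈ E ∧ a ∈ f i ∧ c i ∈ f i) ∧
      (∀ i, g i ∈ E ∧ b ∈ g i ∧ c i ∈ g i) ∧
      Function.Injective f ∧ Function.Injective g ∧
      (∀ i j, f i ≠ g j) ∧ (∀ i, e₀ ≠ f i ∧ e₀ ≠ g i)

/-- `H` contains no Berge-`K_{2,t}`: there do not exist distinct vertices
`a, b, c_1, …, c_t` and `2t` distinct hyperedges `f i ⊇ {a, c i}`,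
`g i ⊇ {b, c i}`. -/
def BergeK2tFree {V : Type*} (E : Finset (Finset V)) (t : ℕ) : Prop :=
  ¬ ∃ (a b : V) (c : Fin t → V) (f g : Fin t → Finset V),
      a ≠ b ∧ Function.Injective c ∧ (∀ i, c i ≠ a ∧ c i ≠ b) ∧
      (∀ i, f i ∈ E ∧ a ∈ f i ∧ c i ∈ f i) ∧
      (∀ i, g i ∈ E ∧ b ∈ g i ∧ c i ∈ g i) ∧
      Function.Injective f ∧ Function.Injective g ∧
      (∀ i j, f i ≠ g j)

/-!
Let `N = N_u` and `D = d_u`; by linearity `|N| = D(k-1)`. Counting incidences,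
`∑_{v ∈ N} d_v = D(k-1) + ∑_e |e ∩ N|` over the edges `e ∌ u`, and `x ≤ [x = 1] + x(x-1)` splits
the last sum into the number `A` of edges missing `u` that meet `N` exactly once and the number
`P` of ordered pairs of neighbours joined by an edge missing `u`.

Both are bounded through one configuration: if vertices `c` have edges `f c ∋ a` and `g c ∋ b`,
all distinct from each other and from an edge `e₀ ⊇ {a, b}`, a greedy choice keeps a `1/(2k-3)`
fraction of them with `f` and `g` injective, and `s` of those would form a Berge-`B_s`; so there
are at most `(2k-3)(s-1)` of them. With `e₀ ∋ u, v` this gives `P ≤ |N|(2k-3)(s-1)`.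
Each edge counted by `A` has `k-1` vertices `w` outside `N ∪ {u}`. The neighbours linked to such
a `w` lie on at most `t-1` edges through `u` (otherwise a Berge-`K_{2,t}` on `u, w`), and for two
linked neighbours `c, c'` on a common edge through `u`, the configuration with `e₀ ∋ c, c'`
bounds the number of `w` linked to both. Double counting gives
`2(k-1)A ≤ 2(t-1)(n-1-|N|) + |N|(k-2)(2k-3)(s-1)`, and the claim follows, `s ≥ 2` absorbing the
term `D(k-1)`.
-/

open Finset

theorem exists_injOn_injOn_card_le {α β γ : Type*} [DecidableEq β] [DecidableEq γ]
    (φ : α → β) (ψ : α → γ) (K : ℕ) (S : Finset α) (hφ : ∀ x ∈ S, #{y ∈ S | φ y = φ x} ≤ K)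
    (hψ : ∀ x ∈ S, #{y ∈ S | ψ y = ψ x} ≤ K) :
    ∃ T ⊆ S, Set.InjOn φ T ∧ Set.InjOn ψ T ∧ #S ≤ (2 * K - 1) * #T := by
  induction S using Finset.strongInduction with
  | _ S ih =>
  obtain rfl | ⟨x, hx⟩ := S.eq_empty_or_nonempty
  · exact ⟨∅, by simp⟩
  let clash : α → Prop := fun y => φ y = φ x ∨ ψ y = ψ x
  have hrest : {y ∈ S | ¬ clash y} ⊂ S :=
    filter_ssubset.2 ⟨x, hx, by simp [clash]⟩
  obtain ⟨T, hTS, hφT, hψT, hcard⟩ := ih _ hrest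
    (fun y hy => (card_le_card (filter_subset_filter _ (filter_subset _ _))).trans
      (hφ y (mem_filter.1 hy).1))
    (fun y hy => (card_le_card (filter_subset_filter _ (filter_subset _ _))).trans
      (hψ y (mem_filter.1 hy).1))
  have hclashT : ∀ y ∈ T, ¬ clash y := fun y hy => (mem_filter.1 (hTS hy)).2
  have hxT : x ∉ T := fun h => hclashT x h (Or.inl rfl)
  -- `x` lies in both fibres, so the elements clashing with `x` number at most `2K - 1`
  have hclash : #{y ∈ S | clash y} ≤ 2 * K - 1 := by
    have hx2 : x ∈ {y ∈ S | φ y = φ x} ∩ {y ∈ S | ψ y = ψ x} := by simp [hx]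
    have hunion := card_union_add_card_inter {y ∈ S | φ y = φ x} {y ∈ S | ψ y = ψ x}
    rw [← filter_or] at hunion
    change #{y ∈ S | φ y = φ x ∨ ψ y = ψ x} ≤ 2 * K - 1
    have := card_pos.2 ⟨x, hx2⟩
    have := hφ x hx
    have := hψ x hx
    omega
  refine ⟨insert x T, insert_subset hx (hTS.trans (filter_subset _ _)), ?_, ?_, ?_⟩
  · rw [coe_insert, Set.injOn_insert (by simpa using hxT)]
    exact ⟨hφT, fun ⟨y, hy, h⟩ => hclashT y hy (Or.inl h)⟩
  · rw [coe_insert, Set.injOn_insert (by simpa using hxT)]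
    exact ⟨hψT, fun ⟨y, hy, h⟩ => hclashT y hy (Or.inr h)⟩
  · rw [card_insert_of_notMem hxT]
    have := card_filter_add_card_filter_not (s := S) clash
    nlinarith

theorem two_mul_card_le_two_mul_card_image_add_sum {α β : Type*} [DecidableEq α] [DecidableEq β]
    (C : Finset α) (φ : α → β) :
    2 * #C ≤ 2 * #(C.image φ) + ∑ c ∈ C, #{c' ∈ C | c' ≠ c ∧ φ c' = φ c} := by
  set m : β → ℕ := fun b => #{c ∈ C | φ c = b}
  have hpairs : ∑ c ∈ C, #{c' ∈ C | c' ≠ c ∧ φ c' = φ c}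
      = ∑ b ∈ C.image φ, m b * (m b - 1) := by
    rw [sum_image' (fun c => m (φ c) - 1)]
    · refine sum_congr rfl fun c hc => ?_
      have : {c' ∈ C | c' ≠ c ∧ φ c' = φ c} = {c' ∈ C | φ c' = φ c}.erase c := by
        ext; simp [and_left_comm]
      rw [this, card_erase_of_mem (by simpa using hc)]
    · intro c _
      rw [sum_congr rfl fun j hj => by rw [(mem_filter.1 hj).2], sum_const, smul_eq_mul]
  have hfibre (n : ℕ) : 2 * n ≤ 2 * 1 + n * (n - 1) := by
    rcases n with _ | _ | n
    · simp
    · simp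
    · simp only [Nat.add_sub_cancel]; nlinarith
  rw [hpairs, card_eq_sum_card_image φ C, card_eq_sum_ones (C.image φ), mul_sum, mul_sum,
    ← sum_add_distrib]
  exact sum_le_sum fun b _ => hfibre (m b)

theorem sum_sum_card_filter_comm {ι α : Type*} [DecidableEq α] (W : Finset ι) (N : Finset α)
    (L : ι → Finset α) (hL : ∀ w ∈ W, L w ⊆ N) (R : α → α → Prop) [DecidableRel R] :
    ∑ w ∈ W, ∑ c ∈ L w, #{c' ∈ L w | R c c'}
      = ∑ c ∈ N, ∑ c' ∈ N with R c c', #{w ∈ W | c ∈ L w ∧ c' ∈ L w} := by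
  have hLN : ∀ w ∈ W, L w = {c ∈ N | c ∈ L w} := fun w hw =>
    (filter_mem_eq_inter.trans (inter_eq_right.2 (hL w hw))).symm
  rw [sum_congr rfl fun w hw => by rw [hLN w hw]]
  simp only [card_eq_sum_ones, sum_filter, ite_sum_zero]
  rw [sum_comm]
  refine sum_congr rfl fun c _ => ?_
  rw [sum_comm]
  refine sum_congr rfl fun c' _ => ?_
  refine sum_congr rfl fun w _ => ?_
  by_cases hc : c ∈ L w <;> by_cases hR : R c c' <;> simp [hc, hR]

theorem sum_card_inter_le_card_filter_add_sum {α : Type*} [DecidableEq α]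
    (F : Finset (Finset α)) (N : Finset α) :
    ∑ e ∈ F, #(e ∩ N) ≤ #{e ∈ F | #(e ∩ N) = 1} + ∑ e ∈ F, #(e ∩ N) * (#(e ∩ N) - 1) := by
  rw [card_eq_sum_ones, sum_filter, ← sum_add_distrib]
  refine sum_le_sum fun e _ => ?_
  split_ifs with h
  · simp [h]
  · rcases Nat.lt_or_gt_of_ne h with h | h
    · omega
    · nlinarith [Nat.sub_add_cancel h.le]

section
variable {V : Type*} {E : Finset (Finset V)}

theorem card_lt_of_bergeBookFree {s : ℕ} (hB : BergeBookFree E s) {a b : V} {e₀ : Finset V}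
    (hab : a ≠ b) (he₀ : e₀ ∈ E) (ha : a ∈ e₀) (hb : b ∈ e₀) {T : Finset V}
    {f g : V → Finset V} (hT : ∀ c ∈ T, c ≠ a ∧ c ≠ b)
    (hf : ∀ c ∈ T, f c ∈ E ∧ a ∈ f c ∧ c ∈ f c) (hg : ∀ c ∈ T, g c ∈ E ∧ b ∈ g c ∧ c ∈ g c)
    (hfT : Set.InjOn f T) (hgT : Set.InjOn g T) (hfg : ∀ c ∈ T, ∀ c' ∈ T, f c ≠ g c')
    (he₀f : ∀ c ∈ T, e₀ ≠ f c) (he₀g : ∀ c ∈ T, e₀ ≠ g c) : #T < s := by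
  by_contra! hsT
  obtain ⟨c⟩ : Nonempty (Fin s ↪ T) :=
    Function.Embedding.nonempty_of_card_le (by simpa using hsT)
  have hc (i : Fin s) : (c i : V) ∈ T := (c i).2
  exact hB ⟨a, b, (c ·), e₀, (f <| c ·), (g <| c ·), hab,
    Subtype.val_injective.comp c.injective, (hT _ <| hc ·), he₀, ha, hb, (hf _ <| hc ·),
    (hg _ <| hc ·), fun i j h => c.injective (Subtype.val_injective (hfT (hc i) (hc j) h)),
    fun i j h => c.injective (Subtype.val_injective (hgT (hc i) (hc j) h)),
    fun i j => hfg _ (hc i) _ (hc j), fun i => ⟨he₀f _ (hc i), he₀g _ (hc i)⟩⟩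

theorem card_lt_of_bergeK2tFree {t : ℕ} (hK : BergeK2tFree E t) {a b : V} (hab : a ≠ b)
    {T : Finset V} {f g : V → Finset V} (hT : ∀ c ∈ T, c ≠ a ∧ c ≠ b)
    (hf : ∀ c ∈ T, f c ∈ E ∧ a ∈ f c ∧ c ∈ f c) (hg : ∀ c ∈ T, g c ∈ E ∧ b ∈ g c ∧ c ∈ g c)
    (hfT : Set.InjOn f T) (hgT : Set.InjOn g T) (hfg : ∀ c ∈ T, ∀ c' ∈ T, f c ≠ g c') :
    #T < t := by
  by_contra! htT
  obtain ⟨c⟩ : Nonempty (Fin t ↪ T) :=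
    Function.Embedding.nonempty_of_card_le (by simpa using htT)
  have hc (i : Fin t) : (c i : V) ∈ T := (c i).2
  exact hK ⟨a, b, (c ·), (f <| c ·), (g <| c ·), hab,
    Subtype.val_injective.comp c.injective, (hT _ <| hc ·), (hf _ <| hc ·),
    (hg _ <| hc ·), fun i j h => c.injective (Subtype.val_injective (hfT (hc i) (hc j) h)),
    fun i j h => c.injective (Subtype.val_injective (hgT (hc i) (hc j) h)),
    fun i j => hfg _ (hc i) _ (hc j)⟩

end

section
variable {V : Type*} [DecidableEq V]

def IsLinear (E : Finset (Finset V)) : Prop :=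
  ∀ e ∈ E, ∀ f ∈ E, e ≠ f → #(e ∩ f) ≤ 1

variable {E : Finset (Finset V)}

theorem IsLinear.eq_of_mem_of_mem (hE : IsLinear E) {e f : Finset V} {a b : V} (he : e ∈ E)
    (hf : f ∈ E) (hab : a ≠ b) (hae : a ∈ e) (hbe : b ∈ e) (haf : a ∈ f) (hbf : b ∈ f) :
    e = f := by
  by_contra hne
  exact hab (card_le_one.1 (hE e he f hf hne) a (mem_inter.2 ⟨hae, haf⟩) b
    (mem_inter.2 ⟨hbe, hbf⟩))

theorem IsLinear.disjoint_erase (hE : IsLinear E) {e f : Finset V} {v : V} (he : e ∈ E)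
    (hf : f ∈ E) (hne : e ≠ f) (hve : v ∈ e) (hvf : v ∈ f) : Disjoint (e.erase v) (f.erase v) :=
  disjoint_left.2 fun _ hxe hxf =>
    hne (hE.eq_of_mem_of_mem he hf (ne_of_mem_erase hxe).symm hve (mem_of_mem_erase hxe) hvf
      (mem_of_mem_erase hxf))

/-- An edge through `a` and `b` (the only one when `E` is linear), or `∅` if there is none. -/
noncomputable def edgeThrough (E : Finset (Finset V)) (a b : V) : Finset V :=
  if h : ∃ e ∈ E, a ∈ e ∧ b ∈ e then h.choose else ∅

theorem edgeThrough_spec {a b : V} (h : ∃ e ∈ E, a ∈ e ∧ b ∈ e) :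
    edgeThrough E a b ∈ E ∧ a ∈ edgeThrough E a b ∧ b ∈ edgeThrough E a b := by
  rw [edgeThrough, dif_pos h]
  exact h.choose_spec

theorem IsLinear.edgeThrough_eq (hE : IsLinear E) {e : Finset V} {a b : V} (hab : a ≠ b)
    (he : e ∈ E) (ha : a ∈ e) (hb : b ∈ e) : edgeThrough E a b = e :=
  have hspec := edgeThrough_spec ⟨e, he, ha, hb⟩
  hE.eq_of_mem_of_mem hspec.1 he hab hspec.2.1 hspec.2.2 ha hb

theorem sum_hDeg_eq_sum_card_inter (E : Finset (Finset V)) (N : Finset V) :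
    ∑ v ∈ N, hDeg E v = ∑ e ∈ E, #(e ∩ N) := by
  simp only [hDeg, card_eq_sum_ones, sum_filter]
  rw [sum_comm]
  refine sum_congr rfl fun e _ => ?_
  rw [inter_comm, ← filter_mem_eq_inter, sum_filter]

theorem sum_card_inter_mul_pred_eq (F : Finset (Finset V)) (N : Finset V) :
    ∑ e ∈ F, #(e ∩ N) * (#(e ∩ N) - 1) = ∑ v ∈ N, ∑ e ∈ F with v ∈ e, #((e ∩ N).erase v) := by
  rw [sum_comm' (t' := F) (s' := fun e => e ∩ N) (by intros; simp; tauto)]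
  refine sum_congr rfl fun e _ => ?_
  rw [sum_congr rfl fun v hv => card_erase_of_mem hv, sum_const, smul_eq_mul]

theorem card_filter_eq_le_pred {k : ℕ} (hunif : ∀ e ∈ E, #e = k) {S : Finset V} {a : V}
    {f : V → Finset V} (hf : ∀ c ∈ S, f c ∈ E ∧ a ∈ f c ∧ c ∈ f c) (ha : ∀ c ∈ S, c ≠ a)
    {x : V} (hx : x ∈ S) : #{y ∈ S | f y = f x} ≤ k - 1 := by
  calc #{y ∈ S | f y = f x} ≤ #((f x).erase a) :=
        card_le_card fun y hy => by
          obtain ⟨hyS, hfy⟩ := mem_filter.1 hy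
          exact mem_erase.2 ⟨ha y hyS, hfy ▸ (hf y hyS).2.2⟩
    _ = k - 1 := by rw [card_erase_of_mem (hf x hx).2.1, hunif _ (hf x hx).1]

theorem card_le_of_bergeBookFree {k s : ℕ} (hunif : ∀ e ∈ E, #e = k) (hB : BergeBookFree E s)
    {a b : V} {e₀ : Finset V} (hab : a ≠ b) (he₀ : e₀ ∈ E) (ha : a ∈ e₀) (hb : b ∈ e₀)
    {S : Finset V} {f g : V → Finset V} (hS : ∀ c ∈ S, c ≠ a ∧ c ≠ b)
    (hf : ∀ c ∈ S, f c ∈ E ∧ a ∈ f c ∧ c ∈ f c) (hg : ∀ c ∈ S, g c ∈ E ∧ b ∈ g c ∧ c ∈ g c)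
    (hfg : ∀ c ∈ S, ∀ c' ∈ S, f c ≠ g c')
    (he₀f : ∀ c ∈ S, e₀ ≠ f c) (he₀g : ∀ c ∈ S, e₀ ≠ g c) :
    #S ≤ (2 * k - 3) * (s - 1) := by
  obtain ⟨T, hTS, hfT, hgT, hST⟩ := exists_injOn_injOn_card_le f g (k - 1) S
    (fun _ hx => card_filter_eq_le_pred hunif hf (fun c hc => (hS c hc).1) hx)
    (fun _ hx => card_filter_eq_le_pred hunif hg (fun c hc => (hS c hc).2) hx)
  have hTs : #T < s := card_lt_of_bergeBookFree hB hab he₀ ha hb (fun c hc => hS c (hTS hc))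
    (fun c hc => hf c (hTS hc)) (fun c hc => hg c (hTS hc)) hfT hgT
    (fun c hc c' hc' => hfg c (hTS hc) c' (hTS hc')) (fun c hc => he₀f c (hTS hc))
    (fun c hc => he₀g c (hTS hc))
  calc #S ≤ (2 * (k - 1) - 1) * #T := hST
    _ ≤ (2 * k - 3) * (s - 1) := Nat.mul_le_mul (by omega) (by omega)

end

section
variable {V : Type*} [Fintype V] [DecidableEq V] {E : Finset (Finset V)}

@[simp]
theorem mem_hNbhd {u v : V} : v ∈ hNbhd E u ↔ v ≠ u ∧ ∃ e ∈ E, u ∈ e ∧ v ∈ e := by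
  simp [hNbhd]

theorem inter_hNbhd_eq_erase {e : Finset V} {u : V} (he : e ∈ E) (hu : u ∈ e) :
    e ∩ hNbhd E u = e.erase u := by
  ext v
  simp only [mem_inter, mem_hNbhd, mem_erase]
  exact ⟨fun ⟨hv, hvu, _⟩ => ⟨hvu, hv⟩, fun ⟨hvu, hv⟩ => ⟨hv, hvu, e, he, hu, hv⟩⟩

theorem card_hNbhd {k : ℕ} (hunif : ∀ e ∈ E, #e = k) (hE : IsLinear E) (u : V) :
    #(hNbhd E u) = hDeg E u * (k - 1) := by
  have hN : hNbhd E u = {e ∈ E | u ∈ e}.biUnion (·.erase u) := by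
    ext v
    simp only [mem_hNbhd, mem_biUnion, mem_filter, mem_erase]
    exact ⟨fun ⟨hvu, e, he, hu, hv⟩ => ⟨e, ⟨he, hu⟩, hvu, hv⟩,
      fun ⟨e, ⟨he, hu⟩, hvu, hv⟩ => ⟨hvu, e, he, hu, hv⟩⟩
  rw [hN, card_biUnion fun e he f hf hne => hE.disjoint_erase (mem_filter.1 he).1
    (mem_filter.1 hf).1 hne (mem_filter.1 he).2 (mem_filter.1 hf).2, hDeg, card_eq_sum_ones,
    sum_mul, one_mul]
  refine sum_congr rfl fun e he => ?_
  rw [card_erase_of_mem (mem_filter.1 he).2, hunif e (mem_filter.1 he).1]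

theorem sum_hDeg_hNbhd {k : ℕ} (hunif : ∀ e ∈ E, #e = k) (u : V) :
    ∑ v ∈ hNbhd E u, hDeg E v
      = hDeg E u * (k - 1) + ∑ e ∈ E with u ∉ e, #(e ∩ hNbhd E u) := by
  rw [sum_hDeg_eq_sum_card_inter, ← sum_filter_add_sum_filter_not E (u ∈ ·), hDeg,
    card_eq_sum_ones, sum_mul, one_mul]
  congr 1
  refine sum_congr rfl fun e he => ?_
  rw [inter_hNbhd_eq_erase (mem_filter.1 he).1 (mem_filter.1 he).2,
    card_erase_of_mem (mem_filter.1 he).2, hunif e (mem_filter.1 he).1]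

theorem card_hNbhd_linked_avoiding_le {k s : ℕ} (hunif : ∀ e ∈ E, #e = k) (hE : IsLinear E)
    (hB : BergeBookFree E s) {u v : V} (hv : v ∈ hNbhd E u) :
    #{c ∈ hNbhd E u | c ≠ v ∧ ∃ e ∈ E, u ∉ e ∧ v ∈ e ∧ c ∈ e} ≤ (2 * k - 3) * (s - 1) := by
  set S := {c ∈ hNbhd E u | c ≠ v ∧ ∃ e ∈ E, u ∉ e ∧ v ∈ e ∧ c ∈ e}
  have hvu := (mem_hNbhd.1 hv).1
  have hf : ∀ c ∈ S, edgeThrough E u c ∈ E ∧ u ∈ edgeThrough E u c ∧ c ∈ edgeThrough E u c :=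
    fun c hc => edgeThrough_spec (mem_hNbhd.1 (mem_filter.1 hc).1).2
  have hg : ∀ c ∈ S, (edgeThrough E v c ∈ E ∧ v ∈ edgeThrough E v c ∧ c ∈ edgeThrough E v c)
      ∧ u ∉ edgeThrough E v c := by
    intro c hc
    obtain ⟨-, hcv, e, he, hue, hve, hce⟩ := mem_filter.1 hc
    rw [hE.edgeThrough_eq hcv.symm he hve hce]
    exact ⟨⟨he, hve, hce⟩, hue⟩
  have he₀ := edgeThrough_spec (mem_hNbhd.1 hv).2
  refine card_le_of_bergeBookFree hunif hB hvu.symm he₀.1 he₀.2.1 he₀.2.2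
    (fun c hc => ⟨(mem_hNbhd.1 (mem_filter.1 hc).1).1, (mem_filter.1 hc).2.1⟩) hf
    (fun c hc => (hg c hc).1) (fun c hc c' hc' h => (hg c' hc').2 (h ▸ (hf c hc).2.1)) ?_
    (fun c hc h => (hg c hc).2 (h ▸ he₀.2.1))
  -- an edge through `u, v, c` would equal the edge through `v, c`, which misses `u`
  intro c hc h
  have hc₀ : c ∈ edgeThrough E u v := h ▸ (hf c hc).2.2
  exact (hg c hc).2 (hE.eq_of_mem_of_mem he₀.1 (hg c hc).1.1 (mem_filter.1 hc).2.1.symm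
    he₀.2.2 hc₀ (hg c hc).1.2.1 (hg c hc).1.2.2 ▸ he₀.2.1)

theorem sum_card_inter_hNbhd_mul_pred_le {k s : ℕ} (hunif : ∀ e ∈ E, #e = k)
    (hE : IsLinear E) (hB : BergeBookFree E s) (u : V) :
    ∑ e ∈ E with u ∉ e, #(e ∩ hNbhd E u) * (#(e ∩ hNbhd E u) - 1)
      ≤ #(hNbhd E u) * ((2 * k - 3) * (s - 1)) := by
  rw [sum_card_inter_mul_pred_eq, ← smul_eq_mul, ← sum_const]
  refine sum_le_sum fun v hv => ?_
  have hdisj : (({e ∈ E | u ∉ e}.filter (v ∈ ·)) : Set (Finset V)).PairwiseDisjoint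
      (fun e => (e ∩ hNbhd E u).erase v) := by
    intro e he f hf hne
    simp only [mem_coe, mem_filter] at he hf
    exact (hE.disjoint_erase he.1.1 hf.1.1 hne he.2 hf.2).mono
      (erase_subset_erase _ inter_subset_left) (erase_subset_erase _ inter_subset_left)
  rw [← card_biUnion hdisj]
  refine (card_le_card fun c hc => ?_).trans (card_hNbhd_linked_avoiding_le hunif hE hB hv)
  obtain ⟨e, he, hce⟩ := mem_biUnion.1 hc
  simp only [mem_filter] at he
  obtain ⟨hcv, hce, hcN⟩ := by simpa only [mem_erase, mem_inter] using hce
  exact mem_filter.2 ⟨hcN, hcv, e, he.1.1, he.1.2, he.2, hce⟩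

def edgesMeetingNbhdOnce (E : Finset (Finset V)) (u : V) : Finset (Finset V) :=
  {e ∈ E | u ∉ e ∧ #(e ∩ hNbhd E u) = 1}

def linkedNbrs (E : Finset (Finset V)) (u w : V) : Finset V :=
  {c ∈ hNbhd E u | ∃ e ∈ edgesMeetingNbhdOnce E u, w ∈ e ∧ c ∈ e}

theorem eq_of_mem_edgesMeetingNbhdOnce {u c c' : V} {e : Finset V}
    (he : e ∈ edgesMeetingNbhdOnce E u) (hc : c ∈ hNbhd E u) (hc' : c' ∈ hNbhd E u)
    (hce : c ∈ e) (hc'e : c' ∈ e) : c = c' :=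
  card_le_one.1 (mem_filter.1 he).2.2.le c (mem_inter.2 ⟨hce, hc⟩) c' (mem_inter.2 ⟨hc'e, hc'⟩)

theorem edgeThrough_mem_edgesMeetingNbhdOnce (hE : IsLinear E) {u w c : V}
    (hw : w ∉ hNbhd E u) (hc : c ∈ linkedNbrs E u w) :
    edgeThrough E w c ∈ edgesMeetingNbhdOnce E u ∧ w ∈ edgeThrough E w c ∧
      c ∈ edgeThrough E w c := by
  obtain ⟨hcN, e, he, hwe, hce⟩ := mem_filter.1 hc
  rw [hE.edgeThrough_eq (ne_of_mem_of_not_mem hcN hw).symm (mem_filter.1 he).1 hwe hce]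
  exact ⟨he, hwe, hce⟩

theorem card_edgesMeetingNbhdOnce_mul {k : ℕ} (hunif : ∀ e ∈ E, #e = k) (u : V) :
    #(edgesMeetingNbhdOnce E u) * (k - 1)
      = ∑ w ∈ (insert u (hNbhd E u))ᶜ, hDeg (edgesMeetingNbhdOnce E u) w := by
  rw [sum_hDeg_eq_sum_card_inter, card_eq_sum_ones, sum_mul, one_mul]
  refine sum_congr rfl fun e he => ?_
  obtain ⟨heE, hue, he1⟩ := mem_filter.1 he
  rw [← sdiff_eq_inter_compl, card_sdiff, inter_comm, inter_insert_of_notMem hue, he1,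
    hunif e heE]

theorem hDeg_edgesMeetingNbhdOnce_le (hE : IsLinear E) {u w : V} (hw : w ∉ hNbhd E u) :
    hDeg (edgesMeetingNbhdOnce E u) w ≤ #(linkedNbrs E u w) := by
  refine (card_le_card (t := (linkedNbrs E u w).image (edgeThrough E w)) fun e he => ?_).trans
    card_image_le
  obtain ⟨heA, hwe⟩ := mem_filter.1 he
  obtain ⟨c, hc⟩ := card_eq_one.1 (mem_filter.1 heA).2.2
  obtain ⟨hce, hcN⟩ := mem_inter.1 (hc ▸ mem_singleton_self c)
  refine mem_image.2 ⟨c, mem_filter.2 ⟨hcN, e, heA, hwe, hce⟩, ?_⟩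
  exact hE.edgeThrough_eq (ne_of_mem_of_not_mem hcN hw).symm (mem_filter.1 heA).1 hwe hce

theorem card_image_edgeThrough_linkedNbrs_le {t : ℕ} (hE : IsLinear E) (hK : BergeK2tFree E t)
    {u w : V} (hwu : w ≠ u) (hw : w ∉ hNbhd E u) :
    #((linkedNbrs E u w).image (edgeThrough E u)) ≤ t - 1 := by
  obtain ⟨T, hTL, hTinj, hTimg⟩ := exists_subset_injOn_image_eq_of_surjOn
    (linkedNbrs E u w : Set V) ((linkedNbrs E u w).image (edgeThrough E u))
    (by simpa only [coe_image] using Set.surjOn_image _ _)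
  have hL : ∀ c ∈ T, c ∈ linkedNbrs E u w := fun c hc => hTL (mem_coe.2 hc)
  have hN : ∀ c ∈ T, c ∈ hNbhd E u := fun c hc => (mem_filter.1 (hL c hc)).1
  have hg := fun c hc => edgeThrough_mem_edgesMeetingNbhdOnce hE hw (hL c hc)
  have hf : ∀ c ∈ T, edgeThrough E u c ∈ E ∧ u ∈ edgeThrough E u c ∧ c ∈ edgeThrough E u c :=
    fun c hc => edgeThrough_spec (mem_hNbhd.1 (hN c hc)).2
  have hT := card_lt_of_bergeK2tFree hK hwu.symm
    (fun c hc => ⟨(mem_hNbhd.1 (hN c hc)).1, ne_of_mem_of_not_mem (hN c hc) hw⟩) hf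
    (fun c hc => ⟨(mem_filter.1 (hg c hc).1).1, (hg c hc).2⟩) hTinj
    (fun c hc c' hc' h => eq_of_mem_edgesMeetingNbhdOnce (hg c hc).1 (hN c hc) (hN c' hc')
      (hg c hc).2.2 (h ▸ (hg c' hc').2.2))
    (fun c hc c' hc' h => (mem_filter.1 (hg c' hc').1).2.1 (h ▸ (hf c hc).2.1))
  rw [← hTimg, card_image_of_injOn hTinj]
  omega

theorem card_filter_mem_linkedNbrs_le {k s : ℕ} (hunif : ∀ e ∈ E, #e = k) (hE : IsLinear E)
    (hB : BergeBookFree E s) {u c c' : V} (hc : c ∈ hNbhd E u) (hc' : c' ∈ hNbhd E u)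
    (hne : c ≠ c') (hc'c : c' ∈ edgeThrough E u c) :
    #{w ∈ (insert u (hNbhd E u))ᶜ | c ∈ linkedNbrs E u w ∧ c' ∈ linkedNbrs E u w}
      ≤ (2 * k - 3) * (s - 1) := by
  set S := {w ∈ (insert u (hNbhd E u))ᶜ | c ∈ linkedNbrs E u w ∧ c' ∈ linkedNbrs E u w}
  have he₀ := edgeThrough_spec (mem_hNbhd.1 hc).2
  have hW : ∀ w ∈ S, w ∉ hNbhd E u := fun w hw h => mem_compl.1 (mem_filter.1 hw).1 (mem_insert_of_mem h)
  have hf := fun w hw => edgeThrough_mem_edgesMeetingNbhdOnce hE (hW w hw)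
    (mem_filter.1 hw).2.1
  have hg := fun w hw => edgeThrough_mem_edgesMeetingNbhdOnce hE (hW w hw)
    (mem_filter.1 hw).2.2
  refine card_le_of_bergeBookFree hunif hB (f := fun w => edgeThrough E w c)
    (g := fun w => edgeThrough E w c') hne he₀.1 he₀.2.2 hc'c
    (fun w hw => ⟨(ne_of_mem_of_not_mem hc (hW w hw)).symm,
      (ne_of_mem_of_not_mem hc' (hW w hw)).symm⟩)
    (fun w hw => ⟨(mem_filter.1 (hf w hw).1).1, (hf w hw).2.2, (hf w hw).2.1⟩)
    (fun w hw => ⟨(mem_filter.1 (hg w hw).1).1, (hg w hw).2.2, (hg w hw).2.1⟩)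
    (fun w hw w' hw' h => hne (eq_of_mem_edgesMeetingNbhdOnce (hf w hw).1 hc hc'
      (hf w hw).2.2 (h ▸ (hg w' hw').2.2)))
    (fun w hw h => (mem_filter.1 (hf w hw).1).2.1 (h ▸ he₀.2.1))
    (fun w hw h => (mem_filter.1 (hg w hw).1).2.1 (h ▸ he₀.2.1))

theorem card_hNbhd_filter_edgeThrough_eq_le {k : ℕ} (hunif : ∀ e ∈ E, #e = k) {u c : V}
    (hc : c ∈ hNbhd E u) :
    #{c' ∈ hNbhd E u | c' ≠ c ∧ edgeThrough E u c' = edgeThrough E u c} ≤ k - 2 := by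
  have he := edgeThrough_spec (mem_hNbhd.1 hc).2
  calc #{c' ∈ hNbhd E u | c' ≠ c ∧ edgeThrough E u c' = edgeThrough E u c}
      ≤ #(((edgeThrough E u c).erase u).erase c) := card_le_card fun c' hc' => by
        obtain ⟨hc'N, hc'c, heq⟩ := mem_filter.1 hc'
        exact mem_erase.2 ⟨hc'c, mem_erase.2 ⟨(mem_hNbhd.1 hc'N).1,
          heq ▸ (edgeThrough_spec (mem_hNbhd.1 hc'N).2).2.2⟩⟩
    _ = k - 2 := by
      rw [card_erase_of_mem (mem_erase.2 ⟨(mem_hNbhd.1 hc).1, he.2.2⟩),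
        card_erase_of_mem he.2.1, hunif _ he.1]
      omega

theorem two_mul_card_edgesMeetingNbhdOnce_mul_le {k s t : ℕ} (hunif : ∀ e ∈ E, #e = k)
    (hE : IsLinear E) (hB : BergeBookFree E s) (hK : BergeK2tFree E t) (u : V) :
    2 * (#(edgesMeetingNbhdOnce E u) * (k - 1))
      ≤ 2 * ((t - 1) * #(insert u (hNbhd E u))ᶜ)
        + #(hNbhd E u) * ((k - 2) * ((2 * k - 3) * (s - 1))) := by
  set N := hNbhd E u
  set W := (insert u N)ᶜ
  set φ := edgeThrough E u
  have hW : ∀ w ∈ W, w ≠ u ∧ w ∉ N := fun w hw => by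
    simpa only [W, mem_compl, mem_insert, not_or] using hw
  calc 2 * (#(edgesMeetingNbhdOnce E u) * (k - 1))
      = ∑ w ∈ W, 2 * hDeg (edgesMeetingNbhdOnce E u) w := by
        rw [card_edgesMeetingNbhdOnce_mul hunif, mul_sum]
    _ ≤ ∑ w ∈ W, (2 * (t - 1) + ∑ c ∈ linkedNbrs E u w,
          #{c' ∈ linkedNbrs E u w | c' ≠ c ∧ φ c' = φ c}) := by
        refine sum_le_sum fun w hw => ?_
        calc 2 * hDeg (edgesMeetingNbhdOnce E u) w ≤ 2 * #(linkedNbrs E u w) :=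
              Nat.mul_le_mul_left 2 (hDeg_edgesMeetingNbhdOnce_le hE (hW w hw).2)
          _ ≤ 2 * #((linkedNbrs E u w).image φ) + ∑ c ∈ linkedNbrs E u w,
                #{c' ∈ linkedNbrs E u w | c' ≠ c ∧ φ c' = φ c} :=
              two_mul_card_le_two_mul_card_image_add_sum _ φ
          _ ≤ _ := Nat.add_le_add_right (Nat.mul_le_mul_left 2
              (card_image_edgeThrough_linkedNbrs_le hE hK (hW w hw).1 (hW w hw).2)) _
    _ = 2 * ((t - 1) * #W) + ∑ c ∈ N, ∑ c' ∈ N with c' ≠ c ∧ φ c' = φ c,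
          #{w ∈ W | c ∈ linkedNbrs E u w ∧ c' ∈ linkedNbrs E u w} := by
        rw [sum_add_distrib, sum_const, smul_eq_mul,
          sum_sum_card_filter_comm W N (linkedNbrs E u) (fun w _ => filter_subset _ _)]
        ring
    _ ≤ 2 * ((t - 1) * #W) + ∑ _c ∈ N, (k - 2) * ((2 * k - 3) * (s - 1)) := by
        refine Nat.add_le_add_left (sum_le_sum fun c hc => ?_) _
        refine (sum_le_card_nsmul _ _ _ fun c' hc' => ?_).trans
          (Nat.mul_le_mul_right _ (card_hNbhd_filter_edgeThrough_eq_le hunif hc))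
        obtain ⟨hc'N, hc'c, hφ⟩ := mem_filter.1 hc'
        exact card_filter_mem_linkedNbrs_le hunif hE hB hc hc'N hc'c.symm
          (show c' ∈ φ c from hφ ▸ (edgeThrough_spec (mem_hNbhd.1 hc'N).2).2.2)
    _ = _ := by rw [sum_const, smul_eq_mul]

theorem sum_hDeg_hNbhd_le {k : ℕ} (hunif : ∀ e ∈ E, #e = k) (u : V) :
    ∑ v ∈ hNbhd E u, hDeg E v ≤ hDeg E u * (k - 1) + #(edgesMeetingNbhdOnce E u)
      + ∑ e ∈ E with u ∉ e, #(e ∩ hNbhd E u) * (#(e ∩ hNbhd E u) - 1) := by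
  have hsplit := sum_card_inter_le_card_filter_add_sum {e ∈ E | u ∉ e} (hNbhd E u)
  rw [filter_filter] at hsplit
  rw [sum_hDeg_hNbhd hunif, add_assoc]
  exact Nat.add_le_add_left hsplit _

theorem card_compl_insert_hNbhd (u : V) :
    #(insert u (hNbhd E u))ᶜ + #(hNbhd E u) + 1 = Fintype.card V := by
  rw [add_assoc, ← card_insert_of_notMem (a := u) (s := hNbhd E u) (by simp), card_compl_add_card]

end

theorem degree_sum_bound_of_counts {k s t n D S A P W : ℕ} (hk : 2 ≤ k) (hs : 2 ≤ s)
    (ht : 1 ≤ t) (hS : S ≤ D * (k - 1) + A + P)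
    (hP : P ≤ D * (k - 1) * ((2 * k - 3) * (s - 1)))
    (hA : 2 * (A * (k - 1)) ≤ 2 * ((t - 1) * W) + D * (k - 1) * ((k - 2) * ((2 * k - 3) * (s - 1))))
    (hW : W + D * (k - 1) + 1 = n) :
    (S : ℝ) ≤ ((t : ℝ) - 1) * ((n : ℝ) - 1) / ((k : ℝ) - 1)
      + ((6 * (k : ℝ) ^ 2 - 15 * (k : ℝ) + 10) * ((s : ℝ) - 1) / 2 - ((t : ℝ) - 1)) * D := by
  have hSR := (Nat.cast_le (α := ℝ)).2 hS
  have hPR := (Nat.cast_le (α := ℝ)).2 hP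
  have hAR := (Nat.cast_le (α := ℝ)).2 hA
  have hWR := congrArg (Nat.cast (R := ℝ)) hW
  push_cast [Nat.cast_sub (by omega : 1 ≤ k), Nat.cast_sub hk, Nat.cast_sub (by omega : 3 ≤ 2 * k),
    Nat.cast_sub (by omega : 1 ≤ s), Nat.cast_sub ht] at hSR hPR hAR hWR
  have hk1 : (0 : ℝ) < k - 1 := by
    have : (2 : ℝ) ≤ k := by exact_mod_cast hk
    linarith
  have hs2 : (0 : ℝ) ≤ s - 2 := by
    have : (2 : ℝ) ≤ s := by exact_mod_cast hs
    linarith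
  rw [div_add' _ _ _ hk1.ne', le_div_iff₀ hk1]
  nlinarith [mul_nonneg (mul_nonneg (Nat.cast_nonneg (α := ℝ) D) hk1.le) hs2]

theorem sum_deg_nbhd_bound_book_k2t_general {V : Type*} [Fintype V] [DecidableEq V]
    (E : Finset (Finset V)) (k s t : ℕ)
    (hk : 3 ≤ k) (hs : 2 ≤ s) (ht : 1 ≤ t)
    (hunif : ∀ e ∈ E, e.card = k)
    (hlin : ∀ e ∈ E, ∀ f ∈ E, e ≠ f → (e ∩ f).card ≤ 1)
    (hB : BergeBookFree E s) (hK : BergeK2tFree E t) (u : V) :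
    (∑ v ∈ hNbhd E u, (hDeg E v : ℝ))
      ≤ ((t : ℝ) - 1) * ((Fintype.card V : ℝ) - 1) / ((k : ℝ) - 1)
        + ((6 * (k : ℝ) ^ 2 - 15 * (k : ℝ) + 10) * ((s : ℝ) - 1) / 2 - ((t : ℝ) - 1))
          * (hDeg E u : ℝ) := by
  have hP := sum_card_inter_hNbhd_mul_pred_le hunif hlin hB u
  have hA := two_mul_card_edgesMeetingNbhdOnce_mul_le hunif hlin hB hK u
  have hW := card_compl_insert_hNbhd (E := E) u
  rw [card_hNbhd hunif hlin u] at hP hA hW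
  rw [← Nat.cast_sum]
  exact degree_sum_bound_of_counts (by omega) hs ht (sum_hDeg_hNbhd_le hunif u) hP hA hW

/-- In a connected linear `k`-uniform hypergraph on `n ≥ 3` vertices (`k ≥ 3`) with
no Berge-`B_s` and no Berge-`K_{2,t}` (`s ≥ 2`, `t ≥ 1`), for any vertex `u`:
`Σ_{v ∈ N_u} d_v ≤ (t-1)(n-1)/(k-1) + [(6k²-15k+10)(s-1)/2 - (t-1)]·d_u`. -/
theorem sum_deg_nbhd_bound_book_k2t {V : Type*} [Fintype V] [DecidableEq V]
    (E : Finset (Finset V)) (k s t : ℕ)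
    (hn : 3 ≤ Fintype.card V) (hk : 3 ≤ k) (hs : 2 ≤ s) (ht : 1 ≤ t)
    (hunif : ∀ e ∈ E, e.card = k)
    (hlin : ∀ e ∈ E, ∀ f ∈ E, e ≠ f → (e ∩ f).card ≤ 1)
    (hconn : ∀ u v : V, Relation.ReflTransGen (fun a b => ∃ e ∈ E, a ∈ e ∧ b ∈ e) u v)
    (hB : BergeBookFree E s) (hK : BergeK2tFree E t) (u : V) :
    (∑ v ∈ hNbhd E u, (hDeg E v : ℝ))
      ≤ ((t : ℝ) - 1) * ((Fintype.card V : ℝ) - 1) / ((k : ℝ) - 1)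
        + ((6 * (k : ℝ) ^ 2 - 15 * (k : ℝ) + 10) * ((s : ℝ) - 1) / 2 - ((t : ℝ) - 1))
          * (hDeg E u : ℝ) :=
  sum_deg_nbhd_bound_book_k2t_general E k s t hk hs ht hunif hlin hB hK u
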